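/- With the measure V₃(w) = Σ_{j=1}^{k} Σ_{i=0}^{k-j} 2^i · n_j as above, applying a rule of shape s·t → t'·s' (moving the p-th sink letter one step left without increasing total length) yields a word w' with V₃(w') = V₃(w) − 2^{k−p}, where k is the number of sink letters in w; in particular V₃ strictly decreases. -/

import Mathlib

/-- Number of sink letters (non-source letters) of a word. -/
def sinkCount {A : Type*} (isS : A → Bool) (w : List A) : ℕ :=
  w.countP fun a => !isS a

/-- V₃(w) = Σ_{j=1}^{k} Σ_{i=0}^{k-j} 2^i · n_j for w = S₁t₁S₂t₂⋯S_k t_k S_{k+1}: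
each source letter contributes 2^m − 1 where m is the number of sink letters
strictly to its right. -/
def V3 {A : Type*} (isS : A → Bool) : List A → ℕ
  | [] => 0
  | a :: w => (if isS a then 2 ^ sinkCount isS w - 1 else 0) + V3 isS w

/-! Rewriting `s t ↦ t' s'` keeps the number of sink letters, so every letter outside the
rewritten factor keeps its contribution to `V3`; the factor itself drops from
`(2 ^ (m + 1) - 1) + 0` to `0 + (2 ^ m - 1)`, where `m` sinks lie to its right. -/

section
variable {A : Type*} (isS : A → Bool)

theorem sinkCount_append (u v : List A) :
    sinkCount isS (u ++ v) = sinkCount isS u + sinkCount isS v :=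
  List.countP_append ..

/-- `V3 (u ++ w)` depends on `w` only through `V3 w` and `sinkCount w`. -/
theorem V3_append_add_eq {w₁ w₂ : List A} {c : ℕ}
    (hsink : sinkCount isS w₁ = sinkCount isS w₂) (hV : V3 isS w₁ + c = V3 isS w₂) :
    ∀ u : List A, V3 isS (u ++ w₁) + c = V3 isS (u ++ w₂)
  | [] => hV
  | a :: u => by
    have hsink' : sinkCount isS (u ++ w₁) = sinkCount isS (u ++ w₂) := by
      rw [sinkCount_append, sinkCount_append, hsink]
    simp only [List.cons_append, V3, hsink', ← V3_append_add_eq hsink hV u, add_assoc]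

theorem V3_sink_source_add_eq_source_sink {s t t' s' : A}
    (hs : isS s = true) (ht : isS t = false) (ht' : isS t' = false) (hs' : isS s' = true)
    (v : List A) :
    V3 isS ([t', s'] ++ v) + 2 ^ sinkCount isS v = V3 isS ([s, t] ++ v) := by
  have hpos : 1 ≤ 2 ^ sinkCount isS v := Nat.one_le_two_pow
  simp only [List.cons_append, List.nil_append, V3, sinkCount, List.countP_cons, hs, ht, ht',
    hs', Bool.not_true, Bool.not_false, Bool.false_eq_true, if_true, if_false, add_zero,
    zero_add, pow_succ] at hpos ⊢
  omega

end

/-- Class (B) case of the termination theorem (Section 5.1): applying a rule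
s·t → t'·s' moving the p-th sink letter one step left gives
V₃(w') = V₃(w) − 2^{k−p}, where k − p is the number of sink letters to the right
of the rewritten occurrence; in particular V₃ strictly decreases. -/
theorem stmt_8 {A : Type*} (isS : A → Bool)
    (u v : List A) (s t t' s' : A)
    (hs : isS s = true) (ht : isS t = false)
    (ht' : isS t' = false) (hs' : isS s' = true) :
    V3 isS (u ++ [t', s'] ++ v) + 2 ^ sinkCount isS v = V3 isS (u ++ [s, t] ++ v) ∧
    V3 isS (u ++ [t', s'] ++ v) < V3 isS (u ++ [s, t] ++ v) := by
  have hsink : sinkCount isS ([t', s'] ++ v) = sinkCount isS ([s, t] ++ v) := by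
    simp [sinkCount, hs, ht, ht', hs']
  have hdrop := V3_append_add_eq isS hsink
    (V3_sink_source_add_eq_source_sink isS hs ht ht' hs' v) u
  simp only [List.append_assoc] at hdrop ⊢
  exact ⟨hdrop, by have := Nat.one_le_two_pow (n := sinkCount isS v); omega⟩
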